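/- arXiv:2310.09450 — 4 statements merged into one kernel-verified Lean document; each statement's English description precedes it below -/
import Mathlib

section
/- (Theorem 1, Network Passivity Index.) Let L, R, W be real m×m matrices with L symmetric and positive semidefinite, W skew-symmetric (Wᵀ = −W), and let C be a real n×m matrix. Assume there exist real numbers r > 0 and c > 0 such that ⟪x, R ⬝ x⟫ ≥ r · ‖x‖² and ‖C ⬝ x‖² ≤ c · ‖x‖² for all x ∈ ℝ^m. Suppose i : ℝ → ℝ^m is continuously differentiable with i(0) = 0, v : ℝ → ℝ^n is continuous, and for every t the equation L ⬝ (deriv i t) = −R ⬝ (i t) + W ⬝ (i t) + Cᵀ ⬝ (v t) holds. Then for every t ≥ 0, ∫₀ᵗ ⟪C ⬝ (i τ), v τ⟫ dτ − (r/c) · ∫₀ᵗ ‖C ⬝ (i τ)‖² dτ ≥ 0; that is, the network with input v and output i_s = C ⬝ i satisfies the OFP inequality with passivity index r/c on every interval [0, t]. -/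
/-!
The magnetic energy `S(i) = ½ ⟪i, L i⟫` is a storage function: along a trajectory, symmetry of
`L` and skew-symmetry of `W` give `dS/dt = ⟪C i, v⟫ - ⟪i, R i⟫`, and
`⟪i, R i⟫ ≥ r ‖i‖² ≥ (r / c) ‖C i‖²`. Integrating from the zero initial state, where `S = 0`,
and using `S ≥ 0` at time `t` yields the OFP inequality.
-/

open MeasureTheory RealInnerProductSpace Matrix

/-- Matrix–vector multiplication viewed as a map between Euclidean spaces. -/
noncomputable def mulVecE {k l : ℕ} (M : Matrix (Fin k) (Fin l) ℝ)
    (x : EuclideanSpace ℝ (Fin l)) : EuclideanSpace ℝ (Fin k) :=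
  (EuclideanSpace.equiv (Fin k) ℝ).symm (M.mulVec (EuclideanSpace.equiv (Fin l) ℝ x))

section

variable {E : Type*} [NormedAddCommGroup E] [InnerProductSpace ℝ E]

theorem HasDerivAt.inner_apply_self {T : E →L[ℝ] E} (hT : (T : E →ₗ[ℝ] E).IsSymmetric)
    {f : ℝ → E} {f' : E} {t : ℝ} (hf : HasDerivAt f f' t) :
    HasDerivAt (fun s ↦ ⟪f s, T (f s)⟫) (2 * ⟪f t, T f'⟫) t := by
  refine (hf.inner ℝ (T.hasFDerivAt.comp_hasDerivAt t hf)).congr_deriv ?_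
  have hsymm : ⟪T f', f t⟫ = ⟪f', T (f t)⟫ := hT f' (f t)
  rw [Function.comp_apply, ← hsymm, real_inner_comm (T f'), two_mul]

end

namespace Matrix

variable {k l : ℕ}

theorem mulVecE_eq_toEuclideanLin (M : Matrix (Fin k) (Fin l) ℝ) :
    mulVecE M = M.toEuclideanLin := rfl

@[fun_prop]
theorem continuous_mulVecE (M : Matrix (Fin k) (Fin l) ℝ) : Continuous (mulVecE M) :=
  M.toEuclideanLin.continuous_of_finiteDimensional

theorem inner_mulVecE_transpose (M : Matrix (Fin k) (Fin l) ℝ) (x y) :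
    ⟪mulVecE Mᵀ x, y⟫ = ⟪x, mulVecE M y⟫ := by
  rw [← conjTranspose_eq_transpose_of_trivial, mulVecE_eq_toEuclideanLin,
    mulVecE_eq_toEuclideanLin, toEuclideanLin_conjTranspose_eq_adjoint,
    LinearMap.adjoint_inner_left]

theorem inner_mulVecE_self_eq_zero_of_transpose_eq_neg {W : Matrix (Fin k) (Fin k) ℝ}
    (hW : Wᵀ = -W) (x) :
    ⟪x, mulVecE W x⟫ = 0 := by
  have h := inner_mulVecE_transpose W x x
  rw [hW, mulVecE_eq_toEuclideanLin, map_neg, LinearMap.neg_apply, inner_neg_left,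
    real_inner_comm, ← mulVecE_eq_toEuclideanLin] at h
  linarith

theorem PosSemidef.inner_mulVecE_self_nonneg {L : Matrix (Fin k) (Fin k) ℝ}
    (hL : L.PosSemidef) (x) :
    0 ≤ ⟪x, mulVecE L x⟫ :=
  (isPositive_toEuclideanLin_iff.mpr hL).inner_nonneg_right x

theorem IsHermitian.hasDerivAt_inner_mulVecE_self {L : Matrix (Fin k) (Fin k) ℝ}
    (hL : L.IsHermitian) {f : ℝ → EuclideanSpace ℝ (Fin k)} {f' : EuclideanSpace ℝ (Fin k)}
    {t : ℝ} (hf : HasDerivAt f f' t) :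
    HasDerivAt (fun s ↦ ⟪f s, mulVecE L (f s)⟫) (2 * ⟪f t, mulVecE L f'⟫) t :=
  hf.inner_apply_self (T := L.toEuclideanLin.toContinuousLinearMap)
    (isSymmetric_toEuclideanLin_iff.mpr hL)

end Matrix

noncomputable def storage {m : ℕ} (L : Matrix (Fin m) (Fin m) ℝ)
    (x : EuclideanSpace ℝ (Fin m)) : ℝ :=
  ⟪x, mulVecE L x⟫ / 2

section Network

variable {m n : ℕ} {L R W : Matrix (Fin m) (Fin m) ℝ} {C : Matrix (Fin n) (Fin m) ℝ}

@[simp]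
theorem storage_zero : storage L 0 = 0 := by
  simp [storage]

theorem storage_nonneg (hL : L.PosSemidef) (x) : 0 ≤ storage L x :=
  div_nonneg (hL.inner_mulVecE_self_nonneg x) zero_le_two

theorem hasDerivAt_storage (hL : L.IsHermitian) (hW : Wᵀ = -W)
    {i : ℝ → EuclideanSpace ℝ (Fin m)} {i' : EuclideanSpace ℝ (Fin m)}
    {u : EuclideanSpace ℝ (Fin n)} {t : ℝ} (hi : HasDerivAt i i' t)
    (hdyn : mulVecE L i' = -(mulVecE R (i t)) + mulVecE W (i t) + mulVecE Cᵀ u) :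
    HasDerivAt (fun s ↦ storage L (i s)) (⟪mulVecE C (i t), u⟫ - ⟪i t, mulVecE R (i t)⟫) t := by
  refine (hL.hasDerivAt_inner_mulVecE_self hi).div_const 2 |>.congr_deriv ?_
  rw [hdyn, inner_add_right, inner_add_right, inner_neg_right,
    inner_mulVecE_self_eq_zero_of_transpose_eq_neg hW, ← inner_mulVecE_transpose Cᵀ (i t) u,
    transpose_transpose]
  ring

theorem div_mul_norm_mulVecE_sq_le_inner {r c : ℝ} (hr : 0 ≤ r) (hc : 0 < c)
    (hR : ∀ x, r * ‖x‖ ^ 2 ≤ ⟪x, mulVecE R x⟫) (hC : ∀ x, ‖mulVecE C x‖ ^ 2 ≤ c * ‖x‖ ^ 2) (x) :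
    r / c * ‖mulVecE C x‖ ^ 2 ≤ ⟪x, mulVecE R x⟫ :=
  calc r / c * ‖mulVecE C x‖ ^ 2
      ≤ r / c * (c * ‖x‖ ^ 2) := mul_le_mul_of_nonneg_left (hC x) (div_nonneg hr hc.le)
    _ = r * ‖x‖ ^ 2 := by field_simp
    _ ≤ ⟪x, mulVecE R x⟫ := hR x

end Network

theorem stmt_2_general {m n : ℕ}
    (L R W : Matrix (Fin m) (Fin m) ℝ) (C : Matrix (Fin n) (Fin m) ℝ)
    (hLpsd : L.PosSemidef) (hW : Wᵀ = -W)
    (r c : ℝ) (hr : 0 < r) (hc : 0 < c)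
    (hR : ∀ x : EuclideanSpace ℝ (Fin m), r * ‖x‖ ^ 2 ≤ ⟪x, mulVecE R x⟫)
    (hC : ∀ x : EuclideanSpace ℝ (Fin m), ‖mulVecE C x‖ ^ 2 ≤ c * ‖x‖ ^ 2)
    (i : ℝ → EuclideanSpace ℝ (Fin m)) (v : ℝ → EuclideanSpace ℝ (Fin n))
    (hi : ContDiff ℝ 1 i) (hi0 : i 0 = 0) (hv : Continuous v)
    (hdyn : ∀ t : ℝ, mulVecE L (deriv i t) =
      -(mulVecE R (i t)) + mulVecE W (i t) + mulVecE Cᵀ (v t)) :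
    ∀ t : ℝ, 0 ≤ t →
      (∫ τ in (0:ℝ)..t, ⟪mulVecE C (i τ), v τ⟫) -
        (r / c) * ∫ τ in (0:ℝ)..t, ‖mulVecE C (i τ)‖ ^ 2 ≥ 0 := by
  intro t ht
  have hi' : Differentiable ℝ i := hi.differentiable one_ne_zero
  have hi_cont : Continuous i := hi.continuous
  have hS (τ : ℝ) := hasDerivAt_storage hLpsd.isHermitian hW (hi' τ).hasDerivAt (hdyn τ)
  have hsupply : Continuous fun τ ↦ ⟪mulVecE C (i τ), v τ⟫ := by fun_prop
  have houtput : Continuous fun τ ↦ ‖mulVecE C (i τ)‖ ^ 2 := by fun_prop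
  have hdiss := intervalIntegral.sub_le_integral_of_hasDeriv_right_of_le ht
    (φ := fun τ ↦ ⟪mulVecE C (i τ), v τ⟫ - r / c * ‖mulVecE C (i τ)‖ ^ 2)
    (continuous_iff_continuousAt.mpr fun τ ↦ (hS τ).continuousAt).continuousOn
    (fun τ _ ↦ (hS τ).hasDerivWithinAt) (hsupply.sub (houtput.const_mul (r / c))).integrableOn_Icc
    (fun τ _ ↦ sub_le_sub_left (div_mul_norm_mulVecE_sq_le_inner hr.le hc hR hC (i τ)) _)
  rw [intervalIntegral.integral_sub (hsupply.intervalIntegrable 0 t)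
    ((houtput.intervalIntegrable 0 t).const_mul _), intervalIntegral.integral_const_mul,
    hi0, storage_zero] at hdiss
  linarith [storage_nonneg hLpsd (i t)]

/-- **Theorem 1 (Network Passivity Index).** The RL microgrid network with
dynamics `L i̇ = −R i + W i + Cᵀ v`, input `v`, output `i_s = C i`, and zero
initial condition satisfies the OFP inequality with passivity index `r/c` on
every interval `[0, t]`. -/
theorem stmt_2 {m n : ℕ}
    (L R W : Matrix (Fin m) (Fin m) ℝ) (C : Matrix (Fin n) (Fin m) ℝ)
    (hLsymm : Lᵀ = L) (hLpsd : L.PosSemidef) (hW : Wᵀ = -W)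
    (r c : ℝ) (hr : 0 < r) (hc : 0 < c)
    (hR : ∀ x : EuclideanSpace ℝ (Fin m), r * ‖x‖ ^ 2 ≤ ⟪x, mulVecE R x⟫)
    (hC : ∀ x : EuclideanSpace ℝ (Fin m), ‖mulVecE C x‖ ^ 2 ≤ c * ‖x‖ ^ 2)
    (i : ℝ → EuclideanSpace ℝ (Fin m)) (v : ℝ → EuclideanSpace ℝ (Fin n))
    (hi : ContDiff ℝ 1 i) (hi0 : i 0 = 0) (hv : Continuous v)
    (hdyn : ∀ t : ℝ, mulVecE L (deriv i t) =
      -(mulVecE R (i t)) + mulVecE W (i t) + mulVecE Cᵀ (v t)) :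
    ∀ t : ℝ, 0 ≤ t →
      (∫ τ in (0:ℝ)..t, ⟪mulVecE C (i τ), v τ⟫) -
        (r / c) * ∫ τ in (0:ℝ)..t, ‖mulVecE C (i τ)‖ ^ 2 ≥ 0 :=
  stmt_2_general L R W C hLpsd hW r c hr hc hR hC i v hi hi0 hv hdyn
end

section
/- Let L, R, W be real m×m matrices with L symmetric and positive semidefinite, W skew-symmetric (Wᵀ = −W), and let C be a real n×m matrix. Assume there exist real numbers r > 0 and c > 0 such that ⟪x, R ⬝ x⟫ ≥ r · ‖x‖² and ‖C ⬝ x‖² ≤ c · ‖x‖² for all x ∈ ℝ^m. Suppose i : ℝ → ℝ^m is continuously differentiable (with arbitrary initial condition i(0)), v : ℝ → ℝ^n is continuous, and for every t the equation L ⬝ (deriv i t) = −R ⬝ (i t) + W ⬝ (i t) + Cᵀ ⬝ (v t) holds. Then for every t ≥ 0, ∫₀ᵗ ⟪C ⬝ (i τ), v τ⟫ dτ ≥ −(1/2) ⟪i 0, L ⬝ (i 0)⟫ + (r/c) · ∫₀ᵗ ‖C ⬝ (i τ)‖² dτ. -/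
/-! The stored energy `V = ½⟪i, L i⟫` is nonnegative, and along a trajectory
`V' = ⟪i, L i'⟫ = ⟪C i, v⟫ - ⟪i, R i⟫` because `L` is symmetric and the skew term `⟪i, W i⟫`
vanishes. The dissipation satisfies `⟪i, R i⟫ ≥ r‖i‖² ≥ (r/c)‖C i‖²`, so integrating `V'`
over `[0, t]` and dropping `V(t) ≥ 0` gives the inequality. -/

open MeasureTheory RealInnerProductSpace Matrix

section MulVecE

variable {k l : ℕ}

lemma mulVecE_apply (M : Matrix (Fin k) (Fin l) ℝ) (x : EuclideanSpace ℝ (Fin l)) :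
    mulVecE M x = WithLp.toLp 2 (M *ᵥ x.ofLp) := rfl

lemma mulVecE_neg (M : Matrix (Fin k) (Fin l) ℝ) (x : EuclideanSpace ℝ (Fin l)) :
    mulVecE (-M) x = -mulVecE M x := by
  simp [mulVecE_apply, neg_mulVec]

noncomputable def mulVecCLM (M : Matrix (Fin k) (Fin l) ℝ) :
    EuclideanSpace ℝ (Fin l) →L[ℝ] EuclideanSpace ℝ (Fin k) :=
  (toEuclideanLin M).toContinuousLinearMap

lemma inner_mulVecE_right (M : Matrix (Fin k) (Fin l) ℝ) (x : EuclideanSpace ℝ (Fin k))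
    (y : EuclideanSpace ℝ (Fin l)) : ⟪x, mulVecE M y⟫ = ⟪mulVecE Mᵀ x, y⟫ := by
  have h := LinearMap.adjoint_inner_left (toEuclideanLin M) y x
  rw [← toEuclideanLin_conjTranspose_eq_adjoint, conjTranspose_eq_transpose_of_trivial] at h
  exact h.symm

lemma inner_mulVecE_self_eq_zero {W : Matrix (Fin k) (Fin k) ℝ} (hW : Wᵀ = -W)
    (x : EuclideanSpace ℝ (Fin k)) : ⟪x, mulVecE W x⟫ = 0 := by
  have h := inner_mulVecE_right W x x
  rw [hW, mulVecE_neg, inner_neg_left, real_inner_comm x] at h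
  linarith

lemma Matrix.PosSemidef.inner_mulVecE_self_nonneg_s3 {L : Matrix (Fin k) (Fin k) ℝ} (hL : L.PosSemidef)
    (x : EuclideanSpace ℝ (Fin k)) : 0 ≤ ⟪x, mulVecE L x⟫ := by
  simpa [mulVecE_apply, PiLp.inner_apply, dotProduct, mul_comm] using
    hL.dotProduct_mulVec_nonneg x.ofLp

end MulVecE

section Energy

variable {m n : ℕ}

noncomputable def storedEnergy (L : Matrix (Fin m) (Fin m) ℝ) (x : EuclideanSpace ℝ (Fin m)) : ℝ :=
  (1 / 2 : ℝ) * ⟪x, mulVecE L x⟫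

lemma storedEnergy_nonneg {L : Matrix (Fin m) (Fin m) ℝ} (hL : L.PosSemidef)
    (x : EuclideanSpace ℝ (Fin m)) : 0 ≤ storedEnergy L x :=
  mul_nonneg (by norm_num) (hL.inner_mulVecE_self_nonneg_s3 x)

lemma HasDerivAt.storedEnergy {L : Matrix (Fin m) (Fin m) ℝ} (hL : Lᵀ = L)
    {i : ℝ → EuclideanSpace ℝ (Fin m)} {i' : EuclideanSpace ℝ (Fin m)} {t : ℝ}
    (hi : HasDerivAt i i' t) :
    HasDerivAt (fun s => storedEnergy L (i s)) ⟪i t, mulVecE L i'⟫ t := by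
  have hLi : HasDerivAt (fun s => mulVecE L (i s)) (mulVecE L i') t :=
    (mulVecCLM L).hasFDerivAt.comp_hasDerivAt t hi
  have hsymm : ⟪i', mulVecE L (i t)⟫ = ⟪i t, mulVecE L i'⟫ := by
    rw [inner_mulVecE_right, hL, real_inner_comm]
  refine ((hi.inner ℝ hLi).const_mul (1 / 2 : ℝ)).congr_deriv ?_
  rw [hsymm]
  ring

lemma inner_mulVecE_eq_supply_sub_dissipation
    {L R W : Matrix (Fin m) (Fin m) ℝ} {C : Matrix (Fin n) (Fin m) ℝ} (hW : Wᵀ = -W)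
    {x x' : EuclideanSpace ℝ (Fin m)} {u : EuclideanSpace ℝ (Fin n)}
    (hdyn : mulVecE L x' = -(mulVecE R x) + mulVecE W x + mulVecE Cᵀ u) :
    ⟪x, mulVecE L x'⟫ = ⟪mulVecE C x, u⟫ - ⟪x, mulVecE R x⟫ := by
  rw [hdyn, inner_add_right, inner_add_right, inner_neg_right, inner_mulVecE_self_eq_zero hW,
    inner_mulVecE_right Cᵀ, transpose_transpose]
  ring

end Energy

/-- Dissipation inequality (eq. (20) in the proof of Theorem 1) for the RL
microgrid network dynamics `L i̇ = −R i + W i + Cᵀ v` with output `i_s = C i`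
and arbitrary initial condition:
`∫₀ᵗ ⟪C (i τ), v τ⟫ dτ ≥ −(1/2)⟪i 0, L (i 0)⟫ + (r/c) ∫₀ᵗ ‖C (i τ)‖² dτ`. -/
theorem stmt_3 {m n : ℕ}
    (L R W : Matrix (Fin m) (Fin m) ℝ) (C : Matrix (Fin n) (Fin m) ℝ)
    (hLsymm : Lᵀ = L) (hLpsd : L.PosSemidef) (hW : Wᵀ = -W)
    (r c : ℝ) (hr : 0 < r) (hc : 0 < c)
    (hR : ∀ x : EuclideanSpace ℝ (Fin m), r * ‖x‖ ^ 2 ≤ ⟪x, mulVecE R x⟫)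
    (hC : ∀ x : EuclideanSpace ℝ (Fin m), ‖mulVecE C x‖ ^ 2 ≤ c * ‖x‖ ^ 2)
    (i : ℝ → EuclideanSpace ℝ (Fin m)) (v : ℝ → EuclideanSpace ℝ (Fin n))
    (hi : ContDiff ℝ 1 i) (hv : Continuous v)
    (hdyn : ∀ t : ℝ, mulVecE L (deriv i t) =
      -(mulVecE R (i t)) + mulVecE W (i t) + mulVecE Cᵀ (v t)) :
    ∀ t : ℝ, 0 ≤ t →
      (∫ τ in (0:ℝ)..t, ⟪mulVecE C (i τ), v τ⟫) ≥
        -((1/2 : ℝ) * ⟪i 0, mulVecE L (i 0)⟫) +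
          (r / c) * ∫ τ in (0:ℝ)..t, ‖mulVecE C (i τ)‖ ^ 2 := by
  intro t ht
  have hV : ∀ s, HasDerivAt (fun s => storedEnergy L (i s))
      (⟪mulVecE C (i s), v s⟫ - ⟪i s, mulVecE R (i s)⟫) s := fun s => by
    rw [← inner_mulVecE_eq_supply_sub_dissipation hW (hdyn s)]
    exact ((hi.differentiable one_ne_zero s).hasDerivAt).storedEnergy hLsymm
  have hdiss : ∀ x, r / c * ‖mulVecE C x‖ ^ 2 ≤ ⟪x, mulVecE R x⟫ := fun x =>
    calc r / c * ‖mulVecE C x‖ ^ 2 ≤ r / c * (c * ‖x‖ ^ 2) := by gcongr; exact hC x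
      _ = r * ‖x‖ ^ 2 := by field_simp
      _ ≤ ⟪x, mulVecE R x⟫ := hR x
  have hCi : Continuous fun s => mulVecE C (i s) := (mulVecCLM C).continuous.comp hi.continuous
  have hsupply : Continuous fun s => ⟪mulVecE C (i s), v s⟫ := hCi.inner hv
  have hout : Continuous fun s => r / c * ‖mulVecE C (i s)‖ ^ 2 :=
    continuous_const.mul (hCi.norm.pow 2)
  have hbalance := intervalIntegral.sub_le_integral_of_hasDeriv_right_of_le ht
    (fun s _ => (hV s).continuousAt.continuousWithinAt) (fun s _ => (hV s).hasDerivWithinAt)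
    (hsupply.fun_sub hout).integrableOn_Icc (fun s _ => by linarith [hdiss (i s)])
  rw [intervalIntegral.integral_sub (hsupply.intervalIntegrable 0 t) (hout.intervalIntegrable 0 t),
    intervalIntegral.integral_const_mul] at hbalance
  have hV0 : storedEnergy L (i 0) = 1 / 2 * ⟪i 0, mulVecE L (i 0)⟫ := rfl
  linarith [storedEnergy_nonneg hLpsd (i t)]
end

section
/- Let N ≥ 1 and d be natural numbers, and for each n ∈ {1, …, N} let uₙ, yₙ : ℝ → ℝ^d be integrable signals and σₙ > 0 a real number such that, for every t ≥ 0, ∫₀ᵗ ⟪uₙ τ, yₙ τ⟫ dτ − σₙ · ∫₀ᵗ ‖yₙ τ‖² dτ ≥ 0. Let σ̲ := min over n of σₙ. Then σ̲ > 0 and, for every t ≥ 0, ∫₀ᵗ (∑ₙ ⟪uₙ τ, yₙ τ⟫) dτ − σ̲ · ∫₀ᵗ (∑ₙ ‖yₙ τ‖²) dτ ≥ 0; that is, the stacked signal pair formed from the N subsystems satisfies the OFP inequality with index σ̲ on every [0, t]. -/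
open MeasureTheory RealInnerProductSpace

/-- If each of the `N` subsystem signal pairs `(uₙ, yₙ)` satisfies the OFP
inequality with index `σₙ > 0` on every `[0, t]`, then the stacked pair
satisfies the OFP inequality with index `σ̲ = min_n σₙ > 0` on every `[0, t]`. -/
theorem stmt_5 {N d : ℕ} (hN : 1 ≤ N)
    (u y : Fin N → ℝ → EuclideanSpace ℝ (Fin d)) (σ : Fin N → ℝ)
    (hσ : ∀ n, 0 < σ n)
    (hint₁ : ∀ n, ∀ t : ℝ,
      IntervalIntegrable (fun τ => ⟪u n τ, y n τ⟫) volume 0 t)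
    (hint₂ : ∀ n, ∀ t : ℝ,
      IntervalIntegrable (fun τ => ‖y n τ‖ ^ 2) volume 0 t)
    (hOFP : ∀ n, ∀ t : ℝ, 0 ≤ t →
      (∫ τ in (0:ℝ)..t, ⟪u n τ, y n τ⟫) -
        σ n * ∫ τ in (0:ℝ)..t, ‖y n τ‖ ^ 2 ≥ 0) :
    0 < (⨅ n, σ n) ∧ ∀ t : ℝ, 0 ≤ t →
      (∫ τ in (0:ℝ)..t, ∑ n, ⟪u n τ, y n τ⟫) -
        (⨅ n, σ n) * ∫ τ in (0:ℝ)..t, ∑ n, ‖y n τ‖ ^ 2 ≥ 0 := by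
  haveI : Nonempty (Fin N) := ⟨⟨0, hN⟩⟩
  obtain ⟨n₀, hn₀⟩ := Finite.exists_min σ
  have hbdd : BddBelow (Set.range σ) := Set.Finite.bddBelow (Set.finite_range σ)
  have hinf : (⨅ n, σ n) = σ n₀ :=
    le_antisymm (ciInf_le hbdd n₀) (le_ciInf hn₀)
  have hinf_le : ∀ n, (⨅ n, σ n) ≤ σ n := fun n => ciInf_le hbdd n
  refine ⟨hinf ▸ hσ n₀, fun t ht => ?_⟩
  rw [intervalIntegral.integral_finset_sum (fun n _ => hint₁ n t),
    intervalIntegral.integral_finset_sum (fun n _ => hint₂ n t),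
    Finset.mul_sum, ← Finset.sum_sub_distrib]
  refine le_of_le_of_eq (Finset.sum_nonneg fun n _ => ?_) rfl
  have h1 := hOFP n t ht
  have h2 : 0 ≤ ∫ τ in (0:ℝ)..t, ‖y n τ‖ ^ 2 :=
    intervalIntegral.integral_nonneg ht (fun τ _ => by positivity)
  nlinarith [hinf_le n]
end

section
/- (Signal-level form of Lemma 2.) Let γ > 0 and let u, y : ℝ → ℝ^d be locally integrable signals satisfying the finite-L₂-gain property with gain γ: for every t ≥ 0, ∫₀ᵗ ‖y τ‖² dτ ≤ γ² · ∫₀ᵗ ‖u τ‖² dτ. Let α, β, κ be real numbers satisfying β ≥ κ·γ > 0 and κ > α·β > 0, and set σ := (1/2) · (1/β + α/κ). Define the transformed signals u'(τ) := α • (y τ) + u τ and y'(τ) := κ • (y τ) + β • (u τ). Then σ > 0 and, for every t ≥ 0, ∫₀ᵗ ⟪u' τ, y' τ⟫ dτ − σ · ∫₀ᵗ ‖y' τ‖² dτ ≥ 0; that is, the pair (u', y') satisfies the OFP inequality with index σ on every [0, t]. -/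
open MeasureTheory RealInnerProductSpace

/-- **Signal-level form of Lemma 2.** If the pair `(u, y)` has finite L₂ gain
`γ` and the interface parameters satisfy `β ≥ κγ > 0` and `κ > αβ > 0`, then
the transformed pair `u' = α • y + u`, `y' = κ • y + β • u` satisfies the OFP
inequality with index `σ = (1/2)(1/β + α/κ) > 0` on every `[0, t]`. -/
theorem stmt_8 {d : ℕ} (γ : ℝ) (hγ : 0 < γ)
    (u y : ℝ → EuclideanSpace ℝ (Fin d))
    (hu : ∀ t : ℝ, IntervalIntegrable (fun τ => ‖u τ‖ ^ 2) volume 0 t)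
    (hy : ∀ t : ℝ, IntervalIntegrable (fun τ => ‖y τ‖ ^ 2) volume 0 t)
    (huy : ∀ t : ℝ, IntervalIntegrable (fun τ => ⟪u τ, y τ⟫) volume 0 t)
    (hL2 : ∀ t : ℝ, 0 ≤ t →
      (∫ τ in (0:ℝ)..t, ‖y τ‖ ^ 2) ≤ γ ^ 2 * ∫ τ in (0:ℝ)..t, ‖u τ‖ ^ 2)
    (α β κ : ℝ) (h₁ : β ≥ κ * γ) (h₂ : 0 < κ * γ)
    (h₃ : κ > α * β) (h₄ : 0 < α * β)
    (σ : ℝ) (hσ : σ = (1/2 : ℝ) * (1/β + α/κ)) :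
    0 < σ ∧ ∀ t : ℝ, 0 ≤ t →
      (∫ τ in (0:ℝ)..t, ⟪α • y τ + u τ, κ • y τ + β • u τ⟫) -
        σ * ∫ τ in (0:ℝ)..t, ‖κ • y τ + β • u τ‖ ^ 2 ≥ 0 := by
  have hκ : 0 < κ := by nlinarith
  have hβ : 0 < β := lt_of_lt_of_le h₂ h₁
  have hα : 0 < α := by nlinarith
  have hσpos : 0 < σ := by rw [hσ]; positivity
  refine ⟨hσpos, fun t ht => ?_⟩
  -- pointwise expansions
  have e1 : ∀ τ, ⟪α • y τ + u τ, κ • y τ + β • u τ⟫ =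
      (α*κ) * ‖y τ‖^2 + (α*β+κ) * ⟪u τ, y τ⟫ + β * ‖u τ‖^2 := by
    intro τ
    simp only [inner_add_left, inner_add_right, real_inner_smul_left,
      real_inner_smul_right, real_inner_self_eq_norm_sq]
    rw [real_inner_comm (y τ) (u τ)]
    ring
  have e2 : ∀ τ, ‖κ • y τ + β • u τ‖^2 =
      (κ^2) * ‖y τ‖^2 + (2*κ*β) * ⟪u τ, y τ⟫ + (β^2) * ‖u τ‖^2 := by
    intro τ
    rw [← real_inner_self_eq_norm_sq]
    simp only [inner_add_left, inner_add_right, real_inner_smul_left,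
      real_inner_smul_right, real_inner_self_eq_norm_sq]
    rw [real_inner_comm (y τ) (u τ)]
    simp [norm_smul, mul_pow, sq_abs]
    ring
  set Y := ∫ τ in (0:ℝ)..t, ‖y τ‖^2 with hY
  set W := ∫ τ in (0:ℝ)..t, ⟪u τ, y τ⟫ with hW
  set U := ∫ τ in (0:ℝ)..t, ‖u τ‖^2 with hU
  have i1 : (∫ τ in (0:ℝ)..t, ⟪α • y τ + u τ, κ • y τ + β • u τ⟫)
      = (α*κ) * Y + (α*β+κ) * W + β * U := by
    rw [show (fun τ => ⟪α • y τ + u τ, κ • y τ + β • u τ⟫)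
        = fun τ => (α*κ) * ‖y τ‖^2 + (α*β+κ) * ⟪u τ, y τ⟫ + β * ‖u τ‖^2
      from funext e1]
    rw [intervalIntegral.integral_add (((hy t).const_mul _).add ((huy t).const_mul _))
        ((hu t).const_mul _),
      intervalIntegral.integral_add ((hy t).const_mul _) ((huy t).const_mul _),
      intervalIntegral.integral_const_mul, intervalIntegral.integral_const_mul,
      intervalIntegral.integral_const_mul]
  have i2 : (∫ τ in (0:ℝ)..t, ‖κ • y τ + β • u τ‖^2)
      = (κ^2) * Y + (2*κ*β) * W + (β^2) * U := by
    rw [show (fun τ => ‖κ • y τ + β • u τ‖^2)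
        = fun τ => (κ^2) * ‖y τ‖^2 + (2*κ*β) * ⟪u τ, y τ⟫ + (β^2) * ‖u τ‖^2
      from funext e2]
    rw [intervalIntegral.integral_add (((hy t).const_mul _).add ((huy t).const_mul _))
        ((hu t).const_mul _),
      intervalIntegral.integral_add ((hy t).const_mul _) ((huy t).const_mul _),
      intervalIntegral.integral_const_mul, intervalIntegral.integral_const_mul,
      intervalIntegral.integral_const_mul]
  have hUnn : 0 ≤ U := by
    rw [hU]
    apply intervalIntegral.integral_nonneg ht
    intro τ _; positivity
  have hYU : Y ≤ γ^2 * U := hL2 t ht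
  have key : (α*κ) * Y + (α*β+κ) * W + β * U -
      (1/2 : ℝ) * (1/β + α/κ) * ((κ^2) * Y + (2*κ*β) * W + (β^2) * U)
      = (κ - α*β) / (2*β*κ) * (β^2 * U - κ^2 * Y) := by
    field_simp
    ring
  rw [i1, i2, hσ, ge_iff_le, key]
  have hb2 : κ^2 * γ^2 ≤ β^2 := by nlinarith
  have h5 : 0 ≤ β^2 * U - κ^2 * Y := by
    nlinarith [mul_le_mul_of_nonneg_left hYU (sq_nonneg κ),
      mul_le_mul_of_nonneg_right hb2 hUnn]
  have h6 : 0 ≤ (κ - α*β) / (2*β*κ) := div_nonneg (by linarith) (by positivity)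
  positivity
end
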